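/- With n duplicate operator copies, each initialized with thresholds θ = Θ/(2n), l = L/(2n), γ = Γ/(2n) and halving its own thresholds after each of its failures, the total accumulated state divergence over all copies and all failures is at most Θ + L·α, and the total number of lost output items is at most Γ + L·β, independent of the number of copies n and the number of failures. -/

import Mathlib

/-!
Copy `j`'s contribution after its `i`-th failure is `(Θ + L α) / n` scaled by `2^{-i}`, so the
geometric series bounds each copy's total by `(Θ + L α) / n` however often it fails, and the
`n` copies together by `Θ + L α`.
-/

open Finset

lemma sum_range_div_two_pow_succ_le {C : ℝ} (hC : 0 ≤ C) (k : ℕ) :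
    ∑ i ∈ range k, C / 2 ^ (i + 1) ≤ C :=
  calc ∑ i ∈ range k, C / 2 ^ (i + 1)
      = C / 2 * ∑ i ∈ range k, (1 / (2 : ℝ)) ^ i := by
        rw [mul_sum]
        refine sum_congr rfl fun i _ => ?_
        rw [one_div_pow, pow_succ]
        field_simp
    _ ≤ C / 2 * 2 := by gcongr; exact sum_geometric_two_le k
    _ = C := by ring

lemma sum_fin_sum_range_div_two_pow_succ_mul_le {C : ℝ} (hC : 0 ≤ C) (n : ℕ) (k : Fin n → ℕ) :
    ∑ j : Fin n, ∑ i ∈ range (k j), C / (2 ^ (i + 1) * n) ≤ C := by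
  rcases n.eq_zero_or_pos with rfl | hn
  · simpa using hC
  calc ∑ j : Fin n, ∑ i ∈ range (k j), C / (2 ^ (i + 1) * n)
      = ∑ j : Fin n, ∑ i ∈ range (k j), C / n / 2 ^ (i + 1) := by
        simp only [div_div, mul_comm]
    _ ≤ ∑ _j : Fin n, C / n :=
        sum_le_sum fun j _ => sum_range_div_two_pow_succ_le (by positivity) (k j)
    _ = C := by
        rw [sum_const, card_univ, Fintype.card_fin, nsmul_eq_mul]
        field_simp

lemma sum_fin_sum_range_threshold_le {A L B : ℝ} (hA : 0 ≤ A) (hL : 0 ≤ L) (hB : 0 ≤ B)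
    (n : ℕ) (k : Fin n → ℕ) :
    ∑ j : Fin n, ∑ i ∈ range (k j),
        (A / (2 ^ (i + 1) * (n : ℝ)) + (L / (2 ^ (i + 1) * (n : ℝ))) * B) ≤ A + L * B := by
  simp only [div_mul_eq_mul_div, ← add_div]
  exact sum_fin_sum_range_div_two_pow_succ_mul_le (by positivity) n k

theorem duplicate_copies_bound_general
    (Θ L Γ α β : ℝ) (hΘ : 0 ≤ Θ) (hL : 0 ≤ L) (hΓ : 0 ≤ Γ)
    (hα : 0 ≤ α) (hβ : 0 ≤ β)
    (n : ℕ) (k : Fin n → ℕ) :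
    (∑ j : Fin n, ∑ i ∈ Finset.range (k j),
        (Θ / (2 ^ (i + 1) * (n : ℝ)) + (L / (2 ^ (i + 1) * (n : ℝ))) * α)
      ≤ Θ + L * α) ∧
    (∑ j : Fin n, ∑ i ∈ Finset.range (k j),
        (Γ / (2 ^ (i + 1) * (n : ℝ)) + (L / (2 ^ (i + 1) * (n : ℝ))) * β)
      ≤ Γ + L * β) :=
  ⟨sum_fin_sum_range_threshold_le hΘ hL hα n k, sum_fin_sum_range_threshold_le hΓ hL hβ n k⟩

/-- `n` duplicate operator copies, copy `j` experiencing `k j`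
failures; after its `i`-th failure copy `j` contributes at most
`Θ/(2^i n) + (L/(2^i n))·α` to state divergence and `Γ/(2^i n) + (L/(2^i n))·β`
to lost output items.  Summing over all copies and all failures, the totals are
at most `Θ + L·α` and `Γ + L·β`, independent of `n` and of the failure counts. -/
theorem duplicate_copies_bound
    (Θ L Γ α β : ℝ) (hΘ : 0 ≤ Θ) (hL : 0 ≤ L) (hΓ : 0 ≤ Γ)
    (hα : 0 ≤ α) (hβ : 0 ≤ β)
    (n : ℕ) (hn : 1 ≤ n) (k : Fin n → ℕ) :
    (∑ j : Fin n, ∑ i ∈ Finset.range (k j),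
        (Θ / (2 ^ (i + 1) * (n : ℝ)) + (L / (2 ^ (i + 1) * (n : ℝ))) * α)
      ≤ Θ + L * α) ∧
    (∑ j : Fin n, ∑ i ∈ Finset.range (k j),
        (Γ / (2 ^ (i + 1) * (n : ℝ)) + (L / (2 ^ (i + 1) * (n : ℝ))) * β)
      ≤ Γ + L * β) :=
  duplicate_copies_bound_general Θ L Γ α β hΘ hL hΓ hα hβ n k
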